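/- arXiv:2301.04886 — 3 statements merged into one kernel-verified Lean document; each statement's English description precedes it below -/
import Mathlib

section
/- For β > 1, there exists a unique positive real solution m(β) to the equation x = tanh(βx). -/
/-!
Since `tanh` is a bijection `ℝ → (-1, 1)` with inverse `artanh`, a positive solution of
`x = tanh (β x)` is exactly a point `x ∈ (0, 1)` with `artanh x / x = β`. The ratio
`artanh x / x` is a secant slope of `artanh` through the origin, hence strictly increasing on
`(0, 1)` because `artanh` is strictly convex on `[0, 1)`; this gives uniqueness. For existence,
`log y ≤ y - 1` gives `artanh x / x ≤ 1 / (1 - x)`, which is below `β` for small `x`, while at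
`x = tanh β` the ratio is `β / tanh β > β`, so the intermediate value theorem applies.
-/

open Set

namespace Real

lemma artanh_eq_half_log_sub {x : ℝ} (hx : x ∈ Ioo (-1) 1) :
    artanh x = (log (1 + x) - log (1 - x)) / 2 := by
  rw [artanh_eq_half_log (Ioo_subset_Icc_self hx), log_div (by grind) (by grind)]
  ring

lemma hasDerivAt_artanh {x : ℝ} (hx : x ∈ Ioo (-1) 1) :
    HasDerivAt artanh (1 / (1 - x ^ 2)) x := by
  have h₁ : 1 + x ≠ 0 := by grind
  have h₂ : 1 - x ≠ 0 := by grind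
  have h₃ : 1 - x ^ 2 ≠ 0 := by nlinarith [hx.1, hx.2]
  have hlog : HasDerivAt (fun y ↦ (log (1 + y) - log (1 - y)) / 2)
      ((1 / (1 + x) - -1 / (1 - x)) / 2) x :=
    ((((hasDerivAt_id x).const_add 1).log h₁).sub
      (((hasDerivAt_id x).const_sub 1).log h₂)).div_const 2
  have hEq : artanh =ᶠ[nhds x] fun y ↦ (log (1 + y) - log (1 - y)) / 2 :=
    Filter.eventually_of_mem (isOpen_Ioo.mem_nhds hx) fun _ ↦ artanh_eq_half_log_sub
  refine (hlog.congr_of_eventuallyEq hEq).congr_deriv ?_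
  field_simp
  ring

lemma continuousOn_artanh : ContinuousOn artanh (Ioo (-1) 1) := fun _ hx ↦
  (hasDerivAt_artanh hx).continuousAt.continuousWithinAt

lemma strictConvexOn_artanh : StrictConvexOn ℝ (Ico 0 1) artanh := by
  refine StrictMonoOn.strictConvexOn_of_deriv (convex_Ico 0 1)
    (continuousOn_artanh.mono fun x hx ↦ ⟨by grind, hx.2⟩) ?_
  rw [interior_Ico]
  intro x hx y hy hxy
  rw [(hasDerivAt_artanh ⟨by grind, hx.2⟩).deriv, (hasDerivAt_artanh ⟨by grind, hy.2⟩).deriv]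
  have hy' : 0 < 1 - y ^ 2 := by nlinarith [hy.1, hy.2]
  gcongr
  exact hx.1.le

lemma strictMonoOn_artanh_div_self : StrictMonoOn (fun x ↦ artanh x / x) (Ioo 0 1) := by
  intro x hx y hy hxy
  have hslope := strictConvexOn_artanh.secant_strict_mono (a := 0) ⟨le_rfl, one_pos⟩
    (Ioo_subset_Ico_self hx) (Ioo_subset_Ico_self hy) hx.1.ne' hy.1.ne' hxy
  simpa only [artanh_zero, sub_zero] using hslope

lemma artanh_le_div_one_sub {x : ℝ} (hx : x ∈ Ioo (-1) 1) : artanh x ≤ x / (1 - x) := by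
  have h₁ : 0 < 1 - x := by grind
  have hlog := log_le_sub_one_of_pos (div_pos (show 0 < 1 + x by grind) h₁)
  rw [artanh_eq_half_log (Ioo_subset_Icc_self hx)]
  have hfrac : (1 + x) / (1 - x) - 1 = 2 * (x / (1 - x)) := by field_simp; ring
  linarith

lemma tanh_pos {x : ℝ} (hx : 0 < x) : 0 < tanh x := by
  rw [tanh_eq_sinh_div_cosh]
  exact div_pos (sinh_pos_iff.2 hx) (cosh_pos x)

lemma eq_tanh_iff {x t : ℝ} : x = tanh t ↔ x ∈ Ioo (-1) 1 ∧ artanh x = t := by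
  constructor
  · rintro rfl
    exact ⟨⟨neg_one_lt_tanh t, tanh_lt_one t⟩, artanh_tanh t⟩
  · rintro ⟨hx, rfl⟩
    exact (tanh_artanh hx).symm

lemma surjOn_artanh_div_self : SurjOn (fun x ↦ artanh x / x) (Ioo 0 1) (Ioi 1) := by
  intro β (hβ : 1 < β)
  have hβ₀ : 0 < β := by linarith
  set a := (β - 1) / (2 * β)
  set b := tanh β
  have ha : a ∈ Ioo 0 1 := ⟨by positivity, by rw [div_lt_one (by positivity)]; linarith⟩
  have hb : b ∈ Ioo 0 1 := ⟨tanh_pos hβ₀, tanh_lt_one β⟩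
  have hsub : uIcc a b ⊆ Ioo 0 1 := ordConnected_Ioo.uIcc_subset ha hb
  have hcont : ContinuousOn (fun x ↦ artanh x / x) (uIcc a b) :=
    (continuousOn_artanh.mono fun x hx ↦ ⟨by grind, (hsub hx).2⟩).div continuousOn_id
      fun x hx ↦ (hsub hx).1.ne'
  have hone_sub_a : 1 - a = (β + 1) / (2 * β) := by simp only [a]; field_simp; ring
  have hfa : artanh a / a < β := by
    calc artanh a / a ≤ a / (1 - a) / a :=
          div_le_div_of_nonneg_right (artanh_le_div_one_sub ⟨by grind, ha.2⟩) ha.1.le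
      _ = 1 / (1 - a) := by field_simp [ha.1.ne']
      _ = 2 * β / (β + 1) := by rw [hone_sub_a, one_div_div]
      _ < β := by rw [div_lt_iff₀ (by linarith)]; nlinarith
  have hfb : β < artanh b / b := by
    rw [artanh_tanh, lt_div_iff₀ hb.1]
    exact mul_lt_of_lt_one_right hβ₀ hb.2
  obtain ⟨x, hx, hxβ⟩ := intermediate_value_uIcc hcont (mem_uIcc.2 (Or.inl ⟨hfa.le, hfb.le⟩))
  exact ⟨x, hsub hx, hxβ⟩

end Real

open Real

lemma pos_and_eq_tanh_mul_iff {β x : ℝ} :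
    0 < x ∧ x = tanh (β * x) ↔ x ∈ Ioo 0 1 ∧ artanh x / x = β := by
  rw [eq_tanh_iff]
  constructor
  · rintro ⟨hx, hx', hβx⟩
    exact ⟨⟨hx, hx'.2⟩, by rw [hβx]; field_simp⟩
  · rintro ⟨hx, hβ⟩
    refine ⟨hx.1, ⟨by grind, hx.2⟩, ?_⟩
    rw [← hβ]
    field_simp [hx.1.ne']

theorem stmt_2 (β : ℝ) (hβ : 1 < β) :
    ∃! x : ℝ, 0 < x ∧ x = Real.tanh (β * x) := by
  simp only [pos_and_eq_tanh_mul_iff]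
  obtain ⟨m, hm, hmβ⟩ := surjOn_artanh_div_self hβ
  exact ⟨m, ⟨hm, hmβ⟩, fun y ⟨hy, hyβ⟩ ↦
    strictMonoOn_artanh_div_self.injOn hy hm (hyβ.trans hmβ.symm)⟩
end

section
/- Local limit bound: there exists a constant C > 0 such that for all N ≥ 1 and all integers s with |s| ≤ N and s ≡ N (mod 2), the binomial coefficient satisfies C(N, (s+N)/2) ≤ C · 2^N · N^{-1/2} · exp(-s²/(2N)). -/
/-!
Weight `C(N, k)` by `exp ((2k - N)² / (2(N + 1)))`. For `k ≥ N / 2` the ratio of consecutive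
coefficients is `(N - k) / (k + 1) = (1 - t) / (1 + t)` with `t = (2k + 1 - N) / (N + 1)`, and
`(1 - t) / (1 + t) ≤ exp (-2t)` exactly compensates the growth of the weight, so the weighted
coefficients decrease away from the middle. The middle coefficient is at most `2^N / √N`
(induction on `(n + 1) C(2n + 2, n + 1) = 2 (2n + 1) C(2n, n)` gives `C(2n, n)² (3n + 1) ≤ 16^n`),
replacing `N + 1` by `N` in the Gaussian costs at most a factor `e`, and the lower half follows
by the symmetry `C(N, k) = C(N, N - k)`.
-/

open Real

/-- `2t` is the first term of the series `log (1 + t) - log (1 - t) = 2 ∑ t^(2j+1) / (2j+1)`. -/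
theorem Real.one_sub_mul_exp_two_mul_le {t : ℝ} (ht : 0 ≤ t) : (1 - t) * exp (2 * t) ≤ 1 + t := by
  rcases lt_or_ge t 1 with ht1 | ht1
  · have hlog := le_hasSum (hasSum_log_sub_log_of_abs_lt_one (abs_lt.2 ⟨by linarith, ht1⟩)) 0
      fun j _ ↦ by positivity
    simp only [CharP.cast_eq_zero, mul_zero, zero_add, div_one, mul_one, pow_one] at hlog
    calc (1 - t) * exp (2 * t) = exp (log (1 - t) + 2 * t) := by
          rw [exp_add, exp_log (by linarith)]
      _ ≤ exp (log (1 + t)) := exp_le_exp.2 (by linarith)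
      _ = 1 + t := exp_log (by linarith)
  · nlinarith [exp_pos (2 * t)]

namespace Nat

theorem centralBinom_sq_mul_le (m : ℕ) : m.centralBinom ^ 2 * (3 * m + 1) ≤ 16 ^ m := by
  induction m with
  | zero => simp
  | succ n ih =>
    suffices (n + 1) ^ 2 * ((n + 1).centralBinom ^ 2 * (3 * (n + 1) + 1)) ≤
        (n + 1) ^ 2 * 16 ^ (n + 1) from Nat.le_of_mul_le_mul_left this (by positivity)
    calc (n + 1) ^ 2 * ((n + 1).centralBinom ^ 2 * (3 * (n + 1) + 1))
        = 4 * ((2 * n + 1) ^ 2 * (3 * n + 4)) * n.centralBinom ^ 2 := by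
          rw [← mul_assoc, ← mul_pow, succ_mul_centralBinom_succ]; ring
      _ ≤ 16 * ((n + 1) ^ 2 * (3 * n + 1)) * n.centralBinom ^ 2 :=
          Nat.mul_le_mul_right _ (by nlinarith)
      _ = 16 * (n + 1) ^ 2 * (n.centralBinom ^ 2 * (3 * n + 1)) := by ring
      _ ≤ 16 * (n + 1) ^ 2 * 16 ^ n := by gcongr
      _ = (n + 1) ^ 2 * 16 ^ (n + 1) := by ring

theorem choose_half_sq_mul_le (N : ℕ) : N.choose (N / 2) ^ 2 * N ≤ 4 ^ N := by
  obtain ⟨m, rfl | rfl⟩ := N.even_or_odd'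
  · rw [mul_div_cancel_left₀ m two_ne_zero, ← centralBinom_eq_two_mul_choose, pow_mul]
    calc m.centralBinom ^ 2 * (2 * m) ≤ m.centralBinom ^ 2 * (3 * m + 1) := by gcongr; omega
      _ ≤ (4 ^ 2) ^ m := centralBinom_sq_mul_le m
  · have hodd : (m + 1).centralBinom = 2 * (2 * m + 1).choose m := by
      rw [centralBinom_eq_two_mul_choose, show 2 * (m + 1) = 2 * m + 1 + 1 by ring,
        choose_succ_succ, choose_symm_half]; ring
    rw [show (2 * m + 1) / 2 = m by omega]
    suffices (2 * m + 1).choose m ^ 2 * (2 * m + 1) * 4 ≤ 4 ^ (2 * m + 1) * 4 by omega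
    calc (2 * m + 1).choose m ^ 2 * (2 * m + 1) * 4
        ≤ (m + 1).centralBinom ^ 2 * (3 * (m + 1) + 1) := by rw [hodd]; ring_nf; nlinarith
      _ ≤ 16 ^ (m + 1) := centralBinom_sq_mul_le (m + 1)
      _ = 4 ^ (2 * m + 1) * 4 := by rw [pow_succ, pow_succ, pow_mul]; ring

theorem choose_half_mul_sqrt_le (N : ℕ) : (N.choose (N / 2) : ℝ) * √N ≤ 2 ^ N := by
  have hsq : ((N.choose (N / 2) : ℝ) * √N) ^ 2 ≤ (2 ^ N) ^ 2 := by
    rw [mul_pow, sq_sqrt (Nat.cast_nonneg _), ← pow_mul, mul_comm N, pow_mul]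
    exact_mod_cast choose_half_sq_mul_le N
  exact (pow_le_pow_iff_left₀ (by positivity) (by positivity) two_ne_zero).1 hsq

theorem choose_succ_mul_exp_le {N k : ℕ} (hk : N ≤ 2 * k + 1) (hkN : k < N) :
    (N.choose (k + 1) : ℝ) * exp (2 * ((2 * k + 1 - N) / (N + 1))) ≤ N.choose k := by
  set t : ℝ := (2 * k + 1 - N) / (N + 1) with ht
  have ht0 : 0 ≤ t := div_nonneg (by rw [sub_nonneg]; exact_mod_cast hk) (by positivity)
  have hrec : (N.choose (k + 1) : ℝ) * (1 + t) = N.choose k * (1 - t) := by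
    have := congrArg (Nat.cast (R := ℝ)) (N.choose_succ_right_eq k)
    push_cast [Nat.cast_sub hkN.le] at this
    rw [ht]; field_simp; linear_combination 2 * this
  rw [← mul_le_mul_iff_left₀ (by linarith : 0 < 1 + t), mul_right_comm, hrec, mul_assoc]
  exact mul_le_mul_of_nonneg_left (one_sub_mul_exp_two_mul_le ht0) (Nat.cast_nonneg _)

theorem choose_mul_exp_sq_antitone (N : ℕ) {k l : ℕ} (hk : N ≤ 2 * k + 1) (hkl : k ≤ l)
    (hl : l ≤ N) :
    (N.choose l : ℝ) * exp ((2 * l - N) ^ 2 / (2 * (N + 1))) ≤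
      N.choose k * exp ((2 * k - N) ^ 2 / (2 * (N + 1))) := by
  induction l, hkl using Nat.le_induction with
  | base => rfl
  | succ l hkl ih =>
    have hexp : exp ((2 * ↑(l + 1) - N) ^ 2 / (2 * (N + 1))) =
        exp (2 * ((2 * l + 1 - N) / (N + 1))) * exp ((2 * l - N) ^ 2 / (2 * (N + 1))) := by
      rw [← exp_add]; congr 1; push_cast; field_simp; ring
    calc (N.choose (l + 1) : ℝ) * exp ((2 * ↑(l + 1) - N) ^ 2 / (2 * (N + 1)))
        = N.choose (l + 1) * exp (2 * ((2 * l + 1 - N) / (N + 1))) *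
            exp ((2 * l - N) ^ 2 / (2 * (N + 1))) := by rw [hexp, mul_assoc]
      _ ≤ N.choose l * exp ((2 * l - N) ^ 2 / (2 * (N + 1))) := by
          gcongr; exact choose_succ_mul_exp_le (by omega) (by omega)
      _ ≤ N.choose k * exp ((2 * k - N) ^ 2 / (2 * (N + 1))) := ih (by omega)

theorem choose_le_choose_half_mul_exp {N k : ℕ} (hN : 0 < N) (hk : N ≤ 2 * k) (hkN : k ≤ N) :
    (N.choose k : ℝ) ≤ N.choose (N / 2) * exp (1 - (2 * k - N) ^ 2 / (2 * N)) := by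
  have hNR : (0 : ℝ) < N := by exact_mod_cast hN
  have hkR : (k : ℝ) ≤ N := by exact_mod_cast hkN
  have hx : (2 * k - N : ℝ) ^ 2 ≤ N ^ 2 := sq_le_sq' (by linarith) (by linarith)
  have hy : (2 * ↑(N / 2) - N : ℝ) ^ 2 ≤ 1 := by
    rcases N.even_or_odd' with ⟨m, rfl | rfl⟩ <;> simp [show (2 * m + 1) / 2 = m by omega]
  have hexp : (2 * ↑(N / 2) - N : ℝ) ^ 2 / (2 * (N + 1)) - (2 * k - N) ^ 2 / (2 * (N + 1)) ≤
      1 - (2 * k - N) ^ 2 / (2 * N) := by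
    rw [div_sub_div_same, sub_div' (by positivity), div_le_div_iff₀ (by positivity) (by positivity)]
    nlinarith
  calc (N.choose k : ℝ)
      = N.choose k * exp ((2 * k - N) ^ 2 / (2 * (N + 1))) *
          exp (-((2 * k - N) ^ 2 / (2 * (N + 1)))) := by rw [mul_assoc, ← exp_add]; simp
    _ ≤ N.choose (N / 2) * exp ((2 * ↑(N / 2) - N) ^ 2 / (2 * (N + 1))) *
          exp (-((2 * k - N) ^ 2 / (2 * (N + 1)))) := by
        refine mul_le_mul_of_nonneg_right ?_ (exp_pos _).le
        exact choose_mul_exp_sq_antitone N (by omega) (by omega) hkN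
    _ ≤ N.choose (N / 2) * exp (1 - (2 * k - N) ^ 2 / (2 * N)) := by
        rw [mul_assoc, ← exp_add, ← sub_eq_add_neg]; gcongr

theorem choose_mul_sqrt_le {N k : ℕ} (hN : 0 < N) (hkN : k ≤ N) :
    (N.choose k : ℝ) * √N ≤ exp 1 * 2 ^ N * exp (-(2 * k - N) ^ 2 / (2 * N)) := by
  wlog hk : N ≤ 2 * k generalizing k with H
  · have hsq : (2 * ↑(N - k) - N : ℝ) ^ 2 = (2 * k - N) ^ 2 := by
      rw [Nat.cast_sub hkN]; ring
    simpa only [choose_symm hkN, hsq] using H (N.sub_le k) (by omega)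
  calc (N.choose k : ℝ) * √N
      ≤ N.choose (N / 2) * exp (1 - (2 * k - N) ^ 2 / (2 * N)) * √N := by
        gcongr; exact choose_le_choose_half_mul_exp hN hk hkN
    _ = N.choose (N / 2) * √N * exp (1 - (2 * k - N) ^ 2 / (2 * N)) := by ring
    _ ≤ 2 ^ N * exp (1 - (2 * k - N) ^ 2 / (2 * N)) := by
        gcongr; exact choose_half_mul_sqrt_le N
    _ = exp 1 * 2 ^ N * exp (-(2 * k - N) ^ 2 / (2 * N)) := by
        rw [sub_eq_add_neg, exp_add, neg_div]; ring

end Nat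

theorem stmt_9 :
    ∃ C : ℝ, 0 < C ∧ ∀ N : ℕ, 1 ≤ N → ∀ s : ℤ, |s| ≤ (N : ℤ) → (s + N) % 2 = 0 →
      (N.choose ((s + N) / 2).toNat : ℝ) ≤
        C * 2 ^ N * (N : ℝ) ^ (-(1 : ℝ) / 2) *
          Real.exp (-(s : ℝ) ^ 2 / (2 * N)) := by
  refine ⟨exp 1, exp_pos 1, fun N hN s hs hpar ↦ ?_⟩
  set k := ((s + N) / 2).toNat
  obtain ⟨hsl, hsr⟩ := abs_le.1 hs
  have hk : 2 * (k : ℤ) - N = s := by omega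
  have hsR : (2 * k - N : ℝ) = s := by exact_mod_cast hk
  have hsqrt : (N : ℝ) ^ (-(1 : ℝ) / 2) = (√N)⁻¹ := by
    rw [sqrt_eq_rpow, ← rpow_neg (Nat.cast_nonneg N)]; norm_num
  have hbound := Nat.choose_mul_sqrt_le hN (show k ≤ N by omega)
  rw [hsR, ← le_div_iff₀ (sqrt_pos.2 (by positivity))] at hbound
  exact hbound.trans_eq (by rw [hsqrt]; ring)
end

section
/- Let β < 1, δ := 1 - β > 0, and let f_N : {-1,+1}^N → ℝ≥0 be uniformly bounded by M. Suppose p : ℕ → (0,1] satisfies Np → ∞, and fix 0 < m < 1. Then (1/2^N) · ∑_{x : s_N(x)² > N(Np)^m} f_N(x) · exp(β·s_N(x)²/(2N)) → 0 as N → ∞. -/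
/-! Write `Y = s²/(2N)`. Hoeffding's inequality (exponential Markov with `cosh t ≤ exp (t²/2)`)
bounds the number of configurations with `Y ≥ t` by `2^(N+1) e^(-t)`. Cutting `{Y > c/2}` into
unit layers, the weight `e^(βY)` on the `k`-th layer is at most `e^(β(c/2+k+1))`, so the tail sum
is at most `2^(N+1) e^β e^(-(1-β)c/2) ∑ₖ e^(-(1-β)k)`, a convergent geometric series as `β < 1`.
With `c = (Np)^m → ∞` and `f ≤ M` (and `β` replaced by `max β 0`) the normalised sum decays. -/

open Finset Real Filter

noncomputable def magnetization {ι : Type*} [Fintype ι] (x : ι → Bool) : ℝ :=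
  ∑ i, if x i then (1 : ℝ) else -1

theorem abs_magnetization_le {ι : Type*} [Fintype ι] (x : ι → Bool) :
    |magnetization x| ≤ Fintype.card ι := by
  calc |magnetization x| ≤ ∑ i, |if x i then (1 : ℝ) else -1| := abs_sum_le_sum_abs _ _
    _ = Fintype.card ι := by simp [apply_ite abs]

theorem Monotone.le_sum_layers {g : ℝ → ℝ} (hg : Monotone g) (hg0 : ∀ y, 0 ≤ g y) {b y : ℝ}
    (hby : b ≤ y) {K : ℕ} (hyK : y ≤ b + K) :
    g y ≤ ∑ k ∈ range (K + 1), g (b + k + 1) * if b + k ≤ y then 1 else 0 := by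
  have hk : ⌊y - b⌋₊ ∈ range (K + 1) :=
    mem_range.2 (Nat.lt_succ_of_le (Nat.floor_le_of_le (by linarith)))
  calc g y ≤ g (b + ⌊y - b⌋₊ + 1) * if b + ⌊y - b⌋₊ ≤ y then 1 else 0 := by
        rw [if_pos (by linarith [Nat.floor_le (sub_nonneg.2 hby)]), mul_one]
        exact hg (by linarith [Nat.lt_floor_add_one (y - b)])
    _ ≤ _ := single_le_sum (f := fun k : ℕ => g (b + k + 1) * if b + k ≤ y then 1 else 0)
        (fun k _ => mul_nonneg (hg0 _) (by split_ifs <;> norm_num)) hk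

section Magnetization

variable {ι : Type*} [Fintype ι] [DecidableEq ι]

theorem sum_exp_mul_magnetization (t : ℝ) :
    ∑ x : ι → Bool, exp (t * magnetization x) = (2 * cosh t) ^ Fintype.card ι := by
  have hprod (x : ι → Bool) :
      exp (t * magnetization x) = ∏ i, exp (t * if x i then (1 : ℝ) else -1) := by
    rw [magnetization, mul_sum, exp_sum]
  simp_rw [hprod, ← Fintype.prod_sum (fun _ (b : Bool) => exp (t * if b then (1 : ℝ) else -1))]
  simp [cosh_eq, mul_div_cancel₀]

theorem card_mul_exp_le_of_le_abs_magnetization {θ : ℝ} (hθ : 0 ≤ θ) (u : ℝ) :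
    #{x : ι → Bool | u ≤ |magnetization x|} * exp (θ * u)
      ≤ 2 ^ (Fintype.card ι + 1) * exp (Fintype.card ι * θ ^ 2 / 2) := by
  have hcosh : (2 * cosh θ) ^ Fintype.card ι
      ≤ 2 ^ Fintype.card ι * exp (Fintype.card ι * θ ^ 2 / 2) := by
    rw [show Fintype.card ι * θ ^ 2 / 2 = Fintype.card ι * (θ ^ 2 / 2) by ring, exp_nat_mul,
      ← mul_pow]
    gcongr
    exact cosh_le_exp_half_sq θ
  calc #{x : ι → Bool | u ≤ |magnetization x|} * exp (θ * u)
      ≤ ∑ x ∈ {x : ι → Bool | u ≤ |magnetization x|},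
          (exp (θ * magnetization x) + exp (-(θ * magnetization x))) := by
        rw [← nsmul_eq_mul]
        refine card_nsmul_le_sum _ _ _ fun x hx => ?_
        calc exp (θ * u) ≤ exp |θ * magnetization x| := by
              rw [abs_mul, abs_of_nonneg hθ]
              exact exp_le_exp.2 (mul_le_mul_of_nonneg_left (mem_filter.1 hx).2 hθ)
          _ ≤ _ := exp_abs_le _
    _ ≤ ∑ x : ι → Bool, (exp (θ * magnetization x) + exp (-θ * magnetization x)) := by
        simp_rw [neg_mul]
        exact sum_le_sum_of_subset_of_nonneg (filter_subset _ _) fun _ _ _ => by positivity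
    _ = 2 * (2 * cosh θ) ^ Fintype.card ι := by
        rw [sum_add_distrib, sum_exp_mul_magnetization, sum_exp_mul_magnetization, cosh_neg]
        ring
    _ ≤ 2 ^ (Fintype.card ι + 1) * exp (Fintype.card ι * θ ^ 2 / 2) := by
        rw [pow_succ']
        linarith

theorem card_le_abs_magnetization_le (hι : 0 < Fintype.card ι) {u : ℝ} (hu : 0 ≤ u) :
    (#{x : ι → Bool | u ≤ |magnetization x|} : ℝ)
      ≤ 2 ^ (Fintype.card ι + 1) * exp (-u ^ 2 / (2 * Fintype.card ι)) := by
  have hn : (0 : ℝ) < Fintype.card ι := by exact_mod_cast hι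
  have h := card_mul_exp_le_of_le_abs_magnetization (ι := ι) (div_nonneg hu hn.le) u
  have hexp : exp (Fintype.card ι * (u / Fintype.card ι) ^ 2 / 2)
      = exp (-u ^ 2 / (2 * Fintype.card ι)) * exp (u / Fintype.card ι * u) := by
    rw [← exp_add]
    congr 1
    field_simp
    ring
  rw [hexp, ← mul_assoc] at h
  exact le_of_mul_le_mul_right h (exp_pos _)

theorem sum_exp_mul_sq_magnetization_le (hι : 0 < Fintype.card ι) {β : ℝ} (hβ0 : 0 ≤ β)
    (hβ1 : β < 1) {c : ℝ} (hc : 0 ≤ c) :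
    ∑ x ∈ {x : ι → Bool | Fintype.card ι * c < magnetization x ^ 2},
        exp (β * magnetization x ^ 2 / (2 * Fintype.card ι))
      ≤ 2 ^ (Fintype.card ι + 1) * (exp β / (1 - exp (-(1 - β)))) * exp (-(1 - β) * c / 2) := by
  set n := Fintype.card ι
  have hn : (0 : ℝ) < n := by exact_mod_cast hι
  set Y : (ι → Bool) → ℝ := fun x => magnetization x ^ 2 / (2 * n) with hY
  have htail (t : ℝ) (ht : 0 ≤ t) : (#{x | t ≤ Y x} : ℝ) ≤ 2 ^ (n + 1) * exp (-t) := by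
    have hsub : ({x | t ≤ Y x} : Finset (ι → Bool))
        ⊆ ({x | √(2 * (n : ℝ) * t) ≤ |magnetization x|} : Finset (ι → Bool)) := by
      intro x
      simp only [mem_filter, mem_univ, true_and, hY]
      intro hx
      rw [← sqrt_sq_eq_abs]
      apply sqrt_le_sqrt
      rw [le_div_iff₀ (by positivity)] at hx
      linarith
    calc (#{x | t ≤ Y x} : ℝ) ≤ #{x : ι → Bool | √(2 * (n : ℝ) * t) ≤ |magnetization x|} := by
          exact_mod_cast card_le_card hsub
      _ ≤ _ := card_le_abs_magnetization_le hι (sqrt_nonneg _)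
      _ = 2 ^ (n + 1) * exp (-t) := by
          rw [sq_sqrt (by positivity)]
          change (2 : ℝ) ^ (n + 1) * exp (-(2 * n * t) / (2 * n)) = _
          field_simp
  have hlayer (x : ι → Bool) (hx : n * c < magnetization x ^ 2) :
      exp (β * magnetization x ^ 2 / (2 * n))
        ≤ ∑ k ∈ range (n + 1), exp (β * (c / 2 + k + 1)) * if c / 2 + k ≤ Y x then 1 else 0 := by
    have hcY : c / 2 < Y x := by
      rw [hY, lt_div_iff₀ (by positivity)]
      linarith
    have hYn : Y x ≤ c / 2 + n := by
      have habs := abs_magnetization_le x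
      rw [hY, div_le_iff₀ (by positivity), ← sq_abs]
      nlinarith [abs_nonneg (magnetization x)]
    rw [mul_div_assoc]
    exact Monotone.le_sum_layers (g := fun y => exp (β * y))
      (fun _ _ h => exp_le_exp.2 (mul_le_mul_of_nonneg_left h hβ0)) (fun _ => (exp_pos _).le)
      hcY.le hYn
  have hr0 : 0 ≤ exp (-(1 - β)) := (exp_pos _).le
  have hr1 : exp (-(1 - β)) < 1 := exp_lt_one_iff.2 (by linarith)
  calc ∑ x ∈ {x : ι → Bool | n * c < magnetization x ^ 2}, exp (β * magnetization x ^ 2 / (2 * n))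
      ≤ ∑ x ∈ {x : ι → Bool | n * c < magnetization x ^ 2}, ∑ k ∈ range (n + 1),
          exp (β * (c / 2 + k + 1)) * if c / 2 + k ≤ Y x then 1 else 0 :=
        sum_le_sum fun x hx => hlayer x (mem_filter.1 hx).2
    _ ≤ ∑ x, ∑ k ∈ range (n + 1), exp (β * (c / 2 + k + 1)) * if c / 2 + k ≤ Y x then 1 else 0 :=
        sum_le_sum_of_subset_of_nonneg (filter_subset _ _) fun _ _ _ =>
          sum_nonneg fun _ _ => mul_nonneg (exp_pos _).le (by split_ifs <;> norm_num)
    _ = ∑ k ∈ range (n + 1), exp (β * (c / 2 + k + 1)) * #{x | c / 2 + k ≤ Y x} := by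
        rw [sum_comm]
        simp_rw [← mul_sum, sum_boole]
    _ ≤ ∑ k ∈ range (n + 1), exp (β * (c / 2 + k + 1)) * (2 ^ (n + 1) * exp (-(c / 2 + k))) := by
        gcongr with k
        exact htail _ (by positivity)
    _ = 2 ^ (n + 1) * exp β * exp (-(1 - β) * c / 2)
          * ∑ k ∈ range (n + 1), exp (-(1 - β)) ^ k := by
        rw [mul_sum]
        refine sum_congr rfl fun k _ => ?_
        have hexp : exp (β * (c / 2 + k + 1)) * exp (-(c / 2 + k))
            = exp β * exp (-(1 - β) * c / 2) * exp (-(1 - β)) ^ k := by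
          rw [← exp_nat_mul, ← exp_add, ← exp_add, ← exp_add]
          ring_nf
        linear_combination 2 ^ (n + 1) * hexp
    _ ≤ 2 ^ (n + 1) * exp β * exp (-(1 - β) * c / 2) * (1 / (1 - exp (-(1 - β)))) := by
        gcongr
        simpa using geom_sum_Ico_le_of_lt_one (m := 0) (n := n + 1) hr0 hr1
    _ = 2 ^ (n + 1) * (exp β / (1 - exp (-(1 - β)))) * exp (-(1 - β) * c / 2) := by ring

end Magnetization

theorem stmt_10_general (β : ℝ) (hβ : β < 1) (M : ℝ)
    (f : ∀ N : ℕ, (Fin N → Bool) → ℝ)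
    (hf0 : ∀ N x, 0 ≤ f N x) (hfM : ∀ N x, f N x ≤ M)
    (p : ℕ → ℝ)
    (hNp : Filter.Tendsto (fun N : ℕ => (N : ℝ) * p N) Filter.atTop Filter.atTop)
    (m : ℝ) (hm0 : 0 < m) :
    Filter.Tendsto
      (fun N : ℕ =>
        (1 / 2 ^ N) *
          ∑ x ∈ Finset.univ.filter
              (fun x : Fin N → Bool =>
                (N : ℝ) * ((N : ℝ) * p N) ^ m <
                  (∑ i, if x i then (1 : ℝ) else -1) ^ 2),
            f N x * Real.exp (β * (∑ i, if x i then (1 : ℝ) else -1) ^ 2 / (2 * N)))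
      Filter.atTop (nhds 0) := by
  set β' := max β 0
  set K := exp β' / (1 - exp (-(1 - β')))
  have hM : 0 ≤ M := (hf0 0 finZeroElim).trans (hfM 0 finZeroElim)
  have hK : 0 ≤ K :=
    div_nonneg (exp_pos _).le (sub_nonneg.2 (exp_le_one_iff.2 (by simp [β', hβ.le])))
  refine squeeze_zero' (g := fun N : ℕ => 2 * M * K * exp (-(1 - β') * (N * p N) ^ m / 2))
    (Eventually.of_forall fun N => ?_) ?_ ?_
  · exact mul_nonneg (by positivity) (sum_nonneg fun x _ => mul_nonneg (hf0 N x) (exp_pos _).le)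
  · filter_upwards [eventually_gt_atTop 0, hNp.eventually_ge_atTop 0] with N hN hNp0
    have htail := sum_exp_mul_sq_magnetization_le (ι := Fin N) (by simpa using hN)
      (le_max_right β 0) (max_lt hβ one_pos) (rpow_nonneg hNp0 m)
    simp only [Fintype.card_fin] at htail
    calc 1 / 2 ^ N * ∑ x ∈ {x : Fin N → Bool | N * (N * p N) ^ m < magnetization x ^ 2},
            f N x * exp (β * magnetization x ^ 2 / (2 * N))
      _ ≤ 1 / 2 ^ N * (M * ∑ x ∈ {x : Fin N → Bool | N * (N * p N) ^ m < magnetization x ^ 2},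
            exp (β' * magnetization x ^ 2 / (2 * N))) := by
          gcongr _ * ?_
          rw [mul_sum]
          gcongr with x
          · exact hfM N x
          · exact le_max_left β 0
      _ ≤ 1 / 2 ^ N * (M * (2 ^ (N + 1) * K * exp (-(1 - β') * (N * p N) ^ m / 2))) :=
          mul_le_mul_of_nonneg_left (mul_le_mul_of_nonneg_left htail hM) (by positivity)
      _ = 2 * M * K * exp (-(1 - β') * (N * p N) ^ m / 2) := by
          field_simp
          ring
  · have hexp := (((tendsto_rpow_atTop hm0).comp hNp).const_mul_atTop_of_neg
      (show -(1 - β') < 0 by simp [β', hβ])).atBot_div_const two_pos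
    simpa using (tendsto_exp_atBot.comp hexp).const_mul (2 * M * K)

theorem stmt_10 (β : ℝ) (hβ : β < 1) (M : ℝ)
    (f : ∀ N : ℕ, (Fin N → Bool) → ℝ)
    (hf0 : ∀ N x, 0 ≤ f N x) (hfM : ∀ N x, f N x ≤ M)
    (p : ℕ → ℝ) (hp : ∀ N, 0 < p N ∧ p N ≤ 1)
    (hNp : Filter.Tendsto (fun N : ℕ => (N : ℝ) * p N) Filter.atTop Filter.atTop)
    (m : ℝ) (hm0 : 0 < m) (hm1 : m < 1) :
    Filter.Tendsto
      (fun N : ℕ =>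
        (1 / 2 ^ N) *
          ∑ x ∈ Finset.univ.filter
              (fun x : Fin N → Bool =>
                (N : ℝ) * ((N : ℝ) * p N) ^ m <
                  (∑ i, if x i then (1 : ℝ) else -1) ^ 2),
            f N x * Real.exp (β * (∑ i, if x i then (1 : ℝ) else -1) ^ 2 / (2 * N)))
      Filter.atTop (nhds 0) :=
  stmt_10_general β hβ M f hf0 hfM p hNp m hm0
end
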